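/- With the same diagonal dominance assumption, the scheme operator g is nonincreasing in each neighbor value and in the previous time-level value: for all ε ≥ 0 at any single neighbor position (or at V), increasing that argument by ε does not increase g. Hence the implicit scheme is monotone in the sense of Barles–Souganidis. -/
import Mathlib


/-- The scheme operator at an interior node. -/
noncomputable def schemeOp (a1 b1 a2 b2 bl bu Δt h : ℝ)
    (U0 V uE uW uN uS uNE uSW uNW uSE : ℝ) : ℝ :=
  (U0 - V) / Δt
    - sSup ((fun s => s / 2 * ((uE - 2 * U0 + uW) / h ^ 2)) '' Set.Icc a1 b1)
    - sSup ((fun s => s / 2 * ((uN - 2 * U0 + uS) / h ^ 2)) '' Set.Icc a2 b2)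
    - max (bu * ((uNE + 2 * U0 + uSW - uE - uW - uN - uS) / (2 * h ^ 2)))
        (bl * ((uE + uW + uN + uS - uSE - 2 * U0 - uNW) / (2 * h ^ 2)))

lemma ssup_aux (a b k : ℝ) (hab : a ≤ b) :
    sSup ((fun s => s / 2 * k) '' Set.Icc a b) = max (a / 2 * k) (b / 2 * k) := by
  apply IsGreatest.csSup_eq
  constructor
  · rcases le_total (a / 2 * k) (b / 2 * k) with h | h
    · rw [max_eq_right h]; exact ⟨b, Set.right_mem_Icc.2 hab, rfl⟩
    · rw [max_eq_left h]; exact ⟨a, Set.left_mem_Icc.2 hab, rfl⟩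
  · rintro y ⟨s, hs, rfl⟩
    rcases le_total 0 k with hk | hk
    · exact le_max_of_le_right (by nlinarith [hs.2])
    · exact le_max_of_le_left (by nlinarith [hs.1])

lemma max_le_max_add (p q t : ℝ) {p' q' : ℝ} (hp : p' ≤ p + t) (hq : q' ≤ q + t) :
    max p' q' ≤ max p q + t := by
  rw [← max_add_add_right]; exact max_le_max hp hq

lemma diff_nonneg_le {X Y c d : ℝ} (hc : 0 ≤ c) (hd : 0 ≤ d)
    (key : Y - X = c * d) : X ≤ Y := by nlinarith [mul_nonneg hc hd]

lemma step1 (A S2 : ℝ) {So Sn Co Cn t : ℝ} (hS : So ≤ Sn + -t) (hC : Co ≤ Cn + t) :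
    A - Sn - S2 - Cn ≤ A - So - S2 - Co := by linarith

lemma step2 (A S1 : ℝ) {So Sn Co Cn t : ℝ} (hS : So ≤ Sn + -t) (hC : Co ≤ Cn + t) :
    A - S1 - Sn - Cn ≤ A - S1 - So - Co := by linarith

lemma step3 (A S1 S2 : ℝ) {Co Cn : ℝ} (h : Co ≤ Cn) :
    A - S1 - S2 - Cn ≤ A - S1 - S2 - Co := by linarith

lemma step0 (S1 S2 C : ℝ) {Ao An : ℝ} (h : Ao ≤ An) :
    Ao - S1 - S2 - C ≤ An - S1 - S2 - C := by linarith

/-- Under diagonal dominance, the scheme operator is nonincreasing in the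
previous-time value and in each neighbor value (Barles–Souganidis
monotonicity). -/
theorem schemeOp_mono_neighbors (a1 b1 a2 b2 bl bu Δt h : ℝ)
    (ha1 : 0 < a1) (h1 : a1 ≤ b1) (ha2 : 0 < a2) (h2 : a2 ≤ b2)
    (hbl : bl < 0) (hbu : 0 < bu) (hΔt : 0 < Δt) (hh : 0 < h)
    (hdd1 : |bu| ≤ a1) (hdd2 : |bu| ≤ a2) (hdd3 : |bl| ≤ a1) (hdd4 : |bl| ≤ a2) :
    ∀ U0 V uE uW uN uS uNE uSW uNW uSE ε : ℝ, 0 ≤ ε →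
      schemeOp a1 b1 a2 b2 bl bu Δt h U0 (V + ε) uE uW uN uS uNE uSW uNW uSE ≤
        schemeOp a1 b1 a2 b2 bl bu Δt h U0 V uE uW uN uS uNE uSW uNW uSE ∧
      schemeOp a1 b1 a2 b2 bl bu Δt h U0 V (uE + ε) uW uN uS uNE uSW uNW uSE ≤
        schemeOp a1 b1 a2 b2 bl bu Δt h U0 V uE uW uN uS uNE uSW uNW uSE ∧
      schemeOp a1 b1 a2 b2 bl bu Δt h U0 V uE (uW + ε) uN uS uNE uSW uNW uSE ≤
        schemeOp a1 b1 a2 b2 bl bu Δt h U0 V uE uW uN uS uNE uSW uNW uSE ∧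
      schemeOp a1 b1 a2 b2 bl bu Δt h U0 V uE uW (uN + ε) uS uNE uSW uNW uSE ≤
        schemeOp a1 b1 a2 b2 bl bu Δt h U0 V uE uW uN uS uNE uSW uNW uSE ∧
      schemeOp a1 b1 a2 b2 bl bu Δt h U0 V uE uW uN (uS + ε) uNE uSW uNW uSE ≤
        schemeOp a1 b1 a2 b2 bl bu Δt h U0 V uE uW uN uS uNE uSW uNW uSE ∧
      schemeOp a1 b1 a2 b2 bl bu Δt h U0 V uE uW uN uS (uNE + ε) uSW uNW uSE ≤
        schemeOp a1 b1 a2 b2 bl bu Δt h U0 V uE uW uN uS uNE uSW uNW uSE ∧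
      schemeOp a1 b1 a2 b2 bl bu Δt h U0 V uE uW uN uS uNE (uSW + ε) uNW uSE ≤
        schemeOp a1 b1 a2 b2 bl bu Δt h U0 V uE uW uN uS uNE uSW uNW uSE ∧
      schemeOp a1 b1 a2 b2 bl bu Δt h U0 V uE uW uN uS uNE uSW (uNW + ε) uSE ≤
        schemeOp a1 b1 a2 b2 bl bu Δt h U0 V uE uW uN uS uNE uSW uNW uSE ∧
      schemeOp a1 b1 a2 b2 bl bu Δt h U0 V uE uW uN uS uNE uSW uNW (uSE + ε) ≤
        schemeOp a1 b1 a2 b2 bl bu Δt h U0 V uE uW uN uS uNE uSW uNW uSE := by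
  intro U0 V uE uW uN uS uNE uSW uNW uSE ε hε
  have hd : (0:ℝ) ≤ ε / (2 * h ^ 2) := div_nonneg hε (by positivity)
  have hbu1 : bu ≤ a1 := (le_abs_self bu).trans hdd1
  have hbu2 : bu ≤ a2 := (le_abs_self bu).trans hdd2
  have hbl1 : -a1 ≤ bl := (abs_le.1 hdd3).1
  have hbl2 : -a2 ≤ bl := (abs_le.1 hdd4).1
  refine ⟨?_, ?_, ?_, ?_, ?_, ?_, ?_, ?_, ?_⟩ <;> simp only [schemeOp]
  · -- V
    apply step0
    rw [div_le_div_iff₀ hΔt hΔt]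
    nlinarith
  · -- uE
    rw [ssup_aux _ _ _ h1, ssup_aux _ _ _ h1, ssup_aux _ _ _ h2]
    refine step1 _ _ (t := a1 * (ε / (2 * h ^ 2))) ?_ ?_
    · exact max_le_max_add _ _ _ (le_of_eq (by ring))
        (diff_nonneg_le (by linarith : (0:ℝ) ≤ b1 - a1) hd (by ring))
    · exact max_le_max_add _ _ _
        (diff_nonneg_le (by linarith : (0:ℝ) ≤ a1 - bu) hd (by ring))
        (diff_nonneg_le (by linarith : (0:ℝ) ≤ a1 + bl) hd (by ring))
  · -- uW
    rw [ssup_aux _ _ _ h1, ssup_aux _ _ _ h1, ssup_aux _ _ _ h2]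
    refine step1 _ _ (t := a1 * (ε / (2 * h ^ 2))) ?_ ?_
    · exact max_le_max_add _ _ _ (le_of_eq (by ring))
        (diff_nonneg_le (by linarith : (0:ℝ) ≤ b1 - a1) hd (by ring))
    · exact max_le_max_add _ _ _
        (diff_nonneg_le (by linarith : (0:ℝ) ≤ a1 - bu) hd (by ring))
        (diff_nonneg_le (by linarith : (0:ℝ) ≤ a1 + bl) hd (by ring))
  · -- uN
    rw [ssup_aux _ _ _ h1, ssup_aux _ _ _ h2, ssup_aux _ _ _ h2]
    refine step2 _ _ (t := a2 * (ε / (2 * h ^ 2))) ?_ ?_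
    · exact max_le_max_add _ _ _ (le_of_eq (by ring))
        (diff_nonneg_le (by linarith : (0:ℝ) ≤ b2 - a2) hd (by ring))
    · exact max_le_max_add _ _ _
        (diff_nonneg_le (by linarith : (0:ℝ) ≤ a2 - bu) hd (by ring))
        (diff_nonneg_le (by linarith : (0:ℝ) ≤ a2 + bl) hd (by ring))
  · -- uS
    rw [ssup_aux _ _ _ h1, ssup_aux _ _ _ h2, ssup_aux _ _ _ h2]
    refine step2 _ _ (t := a2 * (ε / (2 * h ^ 2))) ?_ ?_
    · exact max_le_max_add _ _ _ (le_of_eq (by ring))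
        (diff_nonneg_le (by linarith : (0:ℝ) ≤ b2 - a2) hd (by ring))
    · exact max_le_max_add _ _ _
        (diff_nonneg_le (by linarith : (0:ℝ) ≤ a2 - bu) hd (by ring))
        (diff_nonneg_le (by linarith : (0:ℝ) ≤ a2 + bl) hd (by ring))
  · -- uNE
    exact step3 _ _ _ (max_le_max
      (diff_nonneg_le hbu.le hd (by ring)) le_rfl)
  · -- uSW
    exact step3 _ _ _ (max_le_max
      (diff_nonneg_le hbu.le hd (by ring)) le_rfl)
  · -- uNW
    exact step3 _ _ _ (max_le_max le_rfl
      (diff_nonneg_le (by linarith : (0:ℝ) ≤ -bl) hd (by ring)))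
  · -- uSE
    exact step3 _ _ _ (max_le_max le_rfl
      (diff_nonneg_le (by linarith : (0:ℝ) ≤ -bl) hd (by ring)))
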